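/- Let L ≥ 1 be an integer, Δ > 0, τ = 2π/Δ, and let c_1, …, c_L be real numbers. Then 2 · Σ_{k=1}^L Σ_{l=1}^L c_k c_l Δ² ∫₀^τ ( ∫₀^{t₁} sin(Δ(k t₁ − l t₂)) dt₂ ) dt₁ = 4π Σ_{l=1}^L c_l² / l. -/

import Mathlib

/-!
The inner integral is elementary: `∫₀^{t} sin(Δ(k t − l s)) ds = (cos(Δ(k−l)t) − cos(Δkt)) / (Δl)`.
Over one period `2π/Δ` the integral of `cos(mΔt)` vanishes unless `m = 0`, so for `k, l ≠ 0`
the double integral is `2π/(Δ²l)` when `k = l` and `0` otherwise: the double sum collapses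
onto its diagonal.
-/

open Real

lemma integral_sin_sub_mul (a : ℝ) {b : ℝ} (hb : b ≠ 0) (t : ℝ) :
    ∫ s in (0:ℝ)..t, sin (a - b * s) = (cos (a - b * t) - cos a) / b := by
  rw [intervalIntegral.integral_comp_sub_mul sin hb a, integral_sin, smul_eq_mul, mul_zero,
    sub_zero]
  field_simp

lemma integral_cos_int_mul_period {ω : ℝ} (hω : ω ≠ 0) (m : ℤ) :
    ∫ t in (0:ℝ)..2 * π / ω, cos (m * ω * t) = if m = 0 then 2 * π / ω else 0 := by
  split_ifs with hm
  · simp [hm]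
  · have hmω : (m : ℝ) * ω ≠ 0 := mul_ne_zero (Int.cast_ne_zero.2 hm) hω
    have hperiod : (m : ℝ) * ω * (2 * π / ω) = (2 * m : ℤ) * π := by
      push_cast
      field_simp
    rw [intervalIntegral.integral_comp_mul_left cos hmω, integral_cos, mul_zero, sin_zero,
      hperiod, sin_int_mul_pi, sub_zero, smul_zero]

lemma integral_integral_sin_mul_sub {Δ : ℝ} (hΔ : Δ ≠ 0) {k l : ℤ} (hk : k ≠ 0) (hl : l ≠ 0) :
    ∫ t₁ in (0:ℝ)..2 * π / Δ, ∫ t₂ in (0:ℝ)..t₁, sin (Δ * (k * t₁ - l * t₂)) =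
      if k = l then 2 * π / (Δ ^ 2 * l) else 0 := by
  have hΔl : Δ * l ≠ 0 := mul_ne_zero hΔ (Int.cast_ne_zero.2 hl)
  have inner : ∀ t₁ : ℝ, ∫ t₂ in (0:ℝ)..t₁, sin (Δ * (k * t₁ - l * t₂)) =
      (cos ((k - l : ℤ) * Δ * t₁) - cos (k * Δ * t₁)) / (Δ * l) := by
    intro t₁
    simp_rw [mul_sub, ← mul_assoc, integral_sin_sub_mul _ hΔl]
    push_cast
    ring_nf
  have integrable : ∀ m : ℤ, IntervalIntegrable (fun t : ℝ ↦ cos (m * Δ * t))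
      MeasureTheory.volume 0 (2 * π / Δ) := fun m ↦ by
    apply Continuous.intervalIntegrable
    fun_prop
  simp_rw [inner]
  rw [intervalIntegral.integral_div, intervalIntegral.integral_sub (integrable _) (integrable _),
    integral_cos_int_mul_period hΔ, integral_cos_int_mul_period hΔ, if_neg hk]
  by_cases hkl : k = l
  · subst hkl
    simp only [sub_self, if_true, sub_zero]
    field_simp
  · simp [sub_ne_zero.2 hkl, hkl]

theorem rotation_angle_simplification_general
    (L : ℕ) (Δ : ℝ) (hΔ : 0 < Δ) (τ : ℝ) (hτ : τ = 2 * π / Δ)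
    (c : ℕ → ℝ) :
    2 * ∑ k ∈ Finset.Icc 1 L, ∑ l ∈ Finset.Icc 1 L,
        c k * c l * Δ ^ 2 *
          ∫ t₁ in (0:ℝ)..τ, ∫ t₂ in (0:ℝ)..t₁,
            Real.sin (Δ * ((k : ℝ) * t₁ - (l : ℝ) * t₂)) =
      4 * π * ∑ l ∈ Finset.Icc 1 L, c l ^ 2 / (l : ℝ) := by
  have diagonal : ∀ k ∈ Finset.Icc 1 L, ∀ l ∈ Finset.Icc 1 L,
      (∫ t₁ in (0:ℝ)..τ, ∫ t₂ in (0:ℝ)..t₁, sin (Δ * ((k : ℝ) * t₁ - (l : ℝ) * t₂))) =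
        if k = l then 2 * π / (Δ ^ 2 * l) else 0 := by
    intro k hk l hl
    have hk0 : (k : ℤ) ≠ 0 := by rw [Finset.mem_Icc] at hk; omega
    have hl0 : (l : ℤ) ≠ 0 := by rw [Finset.mem_Icc] at hl; omega
    simpa [hτ] using integral_integral_sin_mul_sub hΔ.ne' hk0 hl0
  rw [Finset.mul_sum, Finset.mul_sum]
  refine Finset.sum_congr rfl fun k hk ↦ ?_
  have hk0 : (k : ℝ) ≠ 0 := Nat.cast_ne_zero.2 (Nat.one_le_iff_ne_zero.1 (Finset.mem_Icc.1 hk).1)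
  rw [Finset.sum_congr rfl fun l hl ↦ by rw [diagonal k hk l hl, mul_ite, mul_zero]]
  rw [Finset.sum_ite_eq, if_pos hk]
  field_simp
  ring

/-- **Rotation-angle simplification (Appendix C of the paper).** For the
polychromatic driving field `Υ(t) = Σ_{l=1}^L c_l Δ e^{ilΔt}` in the single-mode
model, choosing the gate duration `τ = 2π/Δ` makes the two-qubit rotation angle
`Θ(τ) = 2 Σ_{k,l=1}^L c_k c_l Δ² ∫₀^τ ∫₀^{t₁} sin(Δ(k t₁ − l t₂)) dt₂ dt₁`
equal to `4π Σ_{l=1}^L c_l²/l`. -/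
theorem rotation_angle_simplification
    (L : ℕ) (hL : 1 ≤ L) (Δ : ℝ) (hΔ : 0 < Δ) (τ : ℝ) (hτ : τ = 2 * π / Δ)
    (c : ℕ → ℝ) :
    2 * ∑ k ∈ Finset.Icc 1 L, ∑ l ∈ Finset.Icc 1 L,
        c k * c l * Δ ^ 2 *
          ∫ t₁ in (0:ℝ)..τ, ∫ t₂ in (0:ℝ)..t₁,
            Real.sin (Δ * ((k : ℝ) * t₁ - (l : ℝ) * t₂)) =
      4 * π * ∑ l ∈ Finset.Icc 1 L, c l ^ 2 / (l : ℝ) :=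
  rotation_angle_simplification_general L Δ hΔ τ hτ c
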